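/- Let m, n ∈ ℕ with 0 ≤ n < m. The quotient of the ℂ-vector space of bihomogeneous polynomials of bidegree (m−1, n+1) in S by the image under δ of the space of bihomogeneous polynomials of bidegree (m,n) has dimension binom(N+m−1,N)·binom(N+n+1,N) − binom(N+m,N)·binom(N+n,N). -/

import Mathlib

open MvPolynomial

noncomputable section

/-- The polynomial ring `ℂ[Y₀,…,Y_N,X₀,…,X_N]`: the left copy of `Fin (N+1)` indexes the
`Y`-variables, the right copy indexes the `X`-variables. -/
abbrev S (N : ℕ) : Type := MvPolynomial (Fin (N + 1) ⊕ Fin (N + 1)) ℂ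

/-- Weight giving `1` to each `Yᵢ` and `0` to each `Xᵢ`. -/
def wY (N : ℕ) : (Fin (N + 1) ⊕ Fin (N + 1)) → ℕ := Sum.elim (fun _ => 1) (fun _ => 0)

/-- Weight giving `0` to each `Yᵢ` and `1` to each `Xᵢ`. -/
def wX (N : ℕ) : (Fin (N + 1) ⊕ Fin (N + 1)) → ℕ := Sum.elim (fun _ => 0) (fun _ => 1)

/-- `A` is bihomogeneous of bidegree `(m, n)`. -/
def Bihom (N m n : ℕ) (A : S N) : Prop :=
  A.IsWeightedHomogeneous (wY N) m ∧ A.IsWeightedHomogeneous (wX N) n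

/-- The operator `δ(A) = ∑ᵢ Xᵢ · ∂A/∂Yᵢ`. -/
def deltaOp (N : ℕ) (A : S N) : S N :=
  ∑ i : Fin (N + 1), X (Sum.inr i) * pderiv (Sum.inl i) A

/-- The quadratic polynomial `q = ∑ᵢ Xᵢ·Yᵢ`. -/
def qPoly (N : ℕ) : S N := ∑ i : Fin (N + 1), X (Sum.inr i) * X (Sum.inl i)

/-- The operator `δ` as a `ℂ`-linear endomorphism of `S N`. -/
def deltaLM (N : ℕ) : S N →ₗ[ℂ] S N :=
  ∑ i : Fin (N + 1),
    (LinearMap.mulLeft ℂ (X (Sum.inr i) : S N)) ∘ₗ (pderiv (Sum.inl i)).toLinearMap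

/-- The space of bihomogeneous polynomials of bidegree `(m, n)` in `S N`. -/
def bihomSubmodule (N m n : ℕ) : Submodule ℂ (S N) :=
  weightedHomogeneousSubmodule ℂ (wY N) m ⊓ weightedHomogeneousSubmodule ℂ (wX N) n

/-!
Both `δ = ∑ Xᵢ ∂/∂Yᵢ` and `ε = ∑ Yᵢ ∂/∂Xᵢ` are derivations, and comparing them on the variables
gives `[δ, ε] = E_X − E_Y` for the two Euler derivations; on `S_{a,b}` this is multiplication by
`b − a`. If `A ∈ S_{a,b}` with `b < a` and `δ A = 0`, then along the string `A, εA, ε²A, …`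
one gets `δ (ε^{k+1} A) = (k+1)(b−a−k) ε^k A` with nonzero coefficients, while `ε^{b+1} A = 0`
since the `X`-degree runs out; descending the string forces `A = 0`. So `δ` is injective on
`S_{m,n}` for `n < m`, and the cokernel has dimension `dim S_{m−1,n+1} − dim S_{m,n}`, where
`dim S_{a,b} = C(N+a,N)·C(N+b,N)` counts pairs of monomials of degrees `a` and `b`.
-/

lemma Submodule.finrank_quotient_comap_map {K M M' : Type*} [Field K] [AddCommGroup M]
    [Module K M] [AddCommGroup M'] [Module K M'] (f : M →ₗ[K] M') {P : Submodule K M}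
    {V : Submodule K M'} [FiniteDimensional K V] (hPV : P.map f ≤ V)
    (hf : ∀ x ∈ P, f x = 0 → x = 0) :
    (Module.finrank K (V ⧸ (P.map f).comap V.subtype) : ℤ) =
      Module.finrank K V - Module.finrank K P := by
  have hinj : Function.Injective (f ∘ₗ P.subtype) := by
    refine (injective_iff_map_eq_zero _).mpr fun x hx => ?_
    exact Subtype.ext (hf x x.2 hx)
  have hmap : Module.finrank K (P.map f) = Module.finrank K P := by
    rw [← LinearMap.finrank_range_of_inj hinj, LinearMap.range_comp, Submodule.range_subtype]
  have hdim := Submodule.finrank_quotient_add_finrank ((P.map f).comap V.subtype)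
  rw [(Submodule.comapSubtypeEquivOfLe hPV).finrank_eq, hmap] at hdim
  omega

lemma Derivation.sum_apply {R A M ι : Type*} [CommSemiring R] [CommSemiring A] [Algebra R A]
    [AddCommMonoid M] [Module A M] [Module R M] (s : Finset ι) (D : ι → Derivation R A M) (a : A) :
    (∑ i ∈ s, D i) a = ∑ i ∈ s, D i a := by
  rw [← Derivation.coeFnAddMonoidHom_apply, map_sum, Finset.sum_apply]
  rfl

namespace MvPolynomial

variable {R σ : Type*} [CommSemiring R] {φ : MvPolynomial σ R}

lemma pderiv_eq_zero_of_isWeightedHomogeneous_of_lt {w : σ → ℕ} {n : ℕ} {i : σ}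
    (h : φ.IsWeightedHomogeneous w n) (hn : n < w i) : pderiv i φ = 0 := by
  rw [φ.as_sum, map_sum]
  refine Finset.sum_eq_zero fun u hu => ?_
  have hui : u i = 0 := by
    by_contra hi
    have := Finsupp.weight_sub_single_add (w := w) hi
    have := h (mem_support_iff.mp hu)
    omega
  simp [hui]

lemma IsWeightedHomogeneous.X_mul_pderiv {w : σ → ℕ} {n d : ℕ} {i j : σ}
    (h : φ.IsWeightedHomogeneous w (n + w i)) (hd : w j + n = d) :
    (X j * pderiv i φ).IsWeightedHomogeneous w d :=
  hd ▸ (isWeightedHomogeneous_X R w j).mul (h.pderiv rfl)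

end MvPolynomial

lemma Module.End.eq_zero_of_lowering {K V : Type*} [Field K] [AddCommGroup V] [Module K V]
    (d : V →ₗ[K] V) (e : V → V) (c : ℕ → K) {v : V} {n : ℕ} (hn : e^[n] v = 0)
    (hc : ∀ k < n, c k ≠ 0) (hd : ∀ k < n, d (e^[k + 1] v) = c k • e^[k] v) : v = 0 := by
  refine Nat.decreasingInduction (motive := fun k _ => e^[k] v = 0)
    (fun k hk hzero => ?_) hn (Nat.zero_le n)
  have := hd k hk
  rw [hzero, map_zero, eq_comm, smul_eq_zero] at this
  exact this.resolve_left (hc k hk)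

namespace Bihomogeneous

open Sum

variable {N : ℕ}

def deltaDer (N : ℕ) : Derivation ℂ (S N) (S N) :=
  ∑ i : Fin (N + 1), (X (inr i) : S N) • pderiv (inl i)

def epsDer (N : ℕ) : Derivation ℂ (S N) (S N) :=
  ∑ i : Fin (N + 1), (X (inl i) : S N) • pderiv (inr i)

def eulerYDer (N : ℕ) : Derivation ℂ (S N) (S N) :=
  ∑ i : Fin (N + 1), (X (inl i) : S N) • pderiv (inl i)

def eulerXDer (N : ℕ) : Derivation ℂ (S N) (S N) :=
  ∑ i : Fin (N + 1), (X (inr i) : S N) • pderiv (inr i)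

lemma deltaLM_apply (A : S N) : deltaLM N A = deltaDer N A := by
  simp [deltaLM, deltaDer, Derivation.sum_apply]

lemma commutator_deltaDer_epsDer : ⁅deltaDer N, epsDer N⁆ = eulerXDer N - eulerYDer N := by
  refine derivation_ext fun s => ?_
  cases s <;> simp [Derivation.commutator_apply, Derivation.sum_apply, deltaDer, epsDer,
    eulerXDer, eulerYDer, pderiv_X, Pi.single_apply]

lemma eulerXDer_apply {b : ℕ} {A : S N} (hA : A.IsWeightedHomogeneous (wX N) b) :
    eulerXDer N A = (b : ℂ) • A := by
  have := hA.sum_weight_X_mul_pderiv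
  simp only [Fintype.sum_sum_type, wX, Sum.elim_inl, Sum.elim_inr, zero_smul, one_smul,
    Finset.sum_const_zero, zero_add] at this
  simp [eulerXDer, Derivation.sum_apply, this, Nat.cast_smul_eq_nsmul]

lemma eulerYDer_apply {a : ℕ} {A : S N} (hA : A.IsWeightedHomogeneous (wY N) a) :
    eulerYDer N A = (a : ℂ) • A := by
  have := hA.sum_weight_X_mul_pderiv
  simp only [Fintype.sum_sum_type, wY, Sum.elim_inl, Sum.elim_inr, zero_smul, one_smul,
    Finset.sum_const_zero, add_zero] at this
  simp [eulerYDer, Derivation.sum_apply, this, Nat.cast_smul_eq_nsmul]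

lemma deltaDer_epsDer_apply {a b : ℕ} {A : S N} (hA : A ∈ bihomSubmodule N a b) :
    deltaDer N (epsDer N A) = epsDer N (deltaDer N A) + ((b : ℂ) - a) • A := by
  have := congr($(commutator_deltaDer_epsDer (N := N)) A)
  rw [Derivation.commutator_apply, Derivation.coe_sub, Pi.sub_apply, eulerXDer_apply hA.2,
    eulerYDer_apply hA.1] at this
  rw [sub_smul, ← this]
  abel

lemma mem_bihomSubmodule {a b : ℕ} {A : S N} : A ∈ bihomSubmodule N a b ↔ Bihom N a b A := Iff.rfl

lemma deltaDer_mem {a b : ℕ} {A : S N} (hA : A ∈ bihomSubmodule N (a + 1) b) :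
    deltaDer N A ∈ bihomSubmodule N a (b + 1) := by
  obtain ⟨hY, hX⟩ := mem_bihomSubmodule.mp hA
  rw [deltaDer, Derivation.sum_apply]
  refine Submodule.sum_mem _ fun i _ => ?_
  rw [Derivation.smul_apply, smul_eq_mul]
  exact ⟨hY.X_mul_pderiv (i := inl i) (n := a) (zero_add a),
    hX.X_mul_pderiv (i := inl i) (n := b) (add_comm 1 b)⟩

lemma epsDer_mem {a b : ℕ} {A : S N} (hA : A ∈ bihomSubmodule N a (b + 1)) :
    epsDer N A ∈ bihomSubmodule N (a + 1) b := by
  obtain ⟨hY, hX⟩ := mem_bihomSubmodule.mp hA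
  rw [epsDer, Derivation.sum_apply]
  refine Submodule.sum_mem _ fun i _ => ?_
  rw [Derivation.smul_apply, smul_eq_mul]
  exact ⟨hY.X_mul_pderiv (i := inr i) (n := a) (add_comm 1 a),
    hX.X_mul_pderiv (i := inr i) (n := b) (zero_add b)⟩

lemma epsDer_eq_zero {a : ℕ} {A : S N} (hA : A ∈ bihomSubmodule N a 0) : epsDer N A = 0 := by
  rw [epsDer, Derivation.sum_apply]
  refine Finset.sum_eq_zero fun i _ => ?_
  rw [Derivation.smul_apply,
    pderiv_eq_zero_of_isWeightedHomogeneous_of_lt (i := inr i) hA.2 Nat.zero_lt_one, smul_zero]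

lemma epsDer_iterate_mem {a b k : ℕ} {A : S N} (hA : A ∈ bihomSubmodule N a b) (hk : k ≤ b) :
    (epsDer N)^[k] A ∈ bihomSubmodule N (a + k) (b - k) := by
  induction k with
  | zero => exact hA
  | succ k ih =>
    rw [Function.iterate_succ_apply']
    have hmem := ih (by omega)
    rw [show b - k = b - (k + 1) + 1 by omega] at hmem
    exact epsDer_mem hmem

lemma deltaDer_epsDer_iterate {a b k : ℕ} {A : S N} (hA : A ∈ bihomSubmodule N a b)
    (h0 : deltaDer N A = 0) (hk : k ≤ b) :
    deltaDer N ((epsDer N)^[k + 1] A) = (((k : ℂ) + 1) * (b - a - k)) • (epsDer N)^[k] A := by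
  induction k with
  | zero => simp [deltaDer_epsDer_apply hA, h0]
  | succ k ih =>
    rw [Function.iterate_succ_apply' _ (k + 1), deltaDer_epsDer_apply (epsDer_iterate_mem hA hk),
      ih (by omega), Derivation.map_smul, ← Function.iterate_succ_apply' (epsDer N), ← add_smul]
    congr 1
    push_cast [Nat.cast_sub (by omega : k + 1 ≤ b)]
    ring

lemma eq_zero_of_deltaDer_eq_zero {a b : ℕ} (hba : b < a) {A : S N}
    (hA : A ∈ bihomSubmodule N a b) (h0 : deltaDer N A = 0) : A = 0 := by
  refine Module.End.eq_zero_of_lowering (deltaDer N).toLinearMap (epsDer N) _ (n := b + 1) ?_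
    (fun k hk => ?_) (fun k hk => deltaDer_epsDer_iterate hA h0 (by omega))
  · rw [Function.iterate_succ_apply']
    exact epsDer_eq_zero (by simpa using epsDer_iterate_mem hA le_rfl)
  · have : (b : ℂ) - a - k ≠ 0 := by
      rw [← Int.cast_natCast b, ← Int.cast_natCast a, ← Int.cast_natCast k, ← Int.cast_sub,
        ← Int.cast_sub, Int.cast_ne_zero]
      omega
    exact mul_ne_zero (Nat.cast_add_one_ne_zero k) this

def bidegreeExponents (N a b : ℕ) : Set ((Fin (N + 1) ⊕ Fin (N + 1)) →₀ ℕ) :=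
  {u | Finsupp.weight (wY N) u = a ∧ Finsupp.weight (wX N) u = b}

lemma bihomSubmodule_eq_restrictSupport (N a b : ℕ) :
    bihomSubmodule N a b = restrictSupport ℂ (bidegreeExponents N a b) := by
  rw [bihomSubmodule, weightedHomogeneousSubmodule_eq_finsupp_supported,
    weightedHomogeneousSubmodule_eq_finsupp_supported]
  ext A
  exact Set.subset_inter_iff.symm

def bidegreeExponentsEquiv (N a b : ℕ) :
    bidegreeExponents N a b ≃ Sym (Fin (N + 1)) a × Sym (Fin (N + 1)) b :=
  ((Finsupp.equivFunOnFinite.trans (Equiv.sumArrowEquivProdArrow _ _ _)).subtypeEquiv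
      (q := fun p => ∑ i, p.1 i = a ∧ ∑ i, p.2 i = b) fun u => by
        simp [bidegreeExponents, Finsupp.weight_eq_sum, Fintype.sum_sum_type, wY, wX]).trans <|
    Equiv.subtypeProdEquivProd.trans <|
      (Sym.equivNatSumOfFintype _ a).symm.prodCongr (Sym.equivNatSumOfFintype _ b).symm

lemma natCard_bidegreeExponents (N a b : ℕ) :
    Nat.card (bidegreeExponents N a b) = (N + a).choose N * (N + b).choose N := by
  rw [Nat.card_congr (bidegreeExponentsEquiv N a b), Nat.card_prod, Sym.natCard_sym_eq_choose,
    Sym.natCard_sym_eq_choose, Nat.card_fin, Nat.add_right_comm N 1, Nat.add_sub_cancel,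
    Nat.add_right_comm N 1, Nat.add_sub_cancel, Nat.choose_symm_add, Nat.choose_symm_add]

instance (N a b : ℕ) : FiniteDimensional ℂ (bihomSubmodule N a b) := by
  have : Finite (bidegreeExponents N a b) := Nat.finite_of_card_ne_zero <| by
    rw [natCard_bidegreeExponents]
    exact Nat.mul_ne_zero (Nat.choose_pos (by omega)).ne' (Nat.choose_pos (by omega)).ne'
  rw [bihomSubmodule_eq_restrictSupport]
  exact Module.Finite.of_basis (basisRestrictSupport ℂ _)

lemma finrank_bihomSubmodule (N a b : ℕ) :
    Module.finrank ℂ (bihomSubmodule N a b) = (N + a).choose N * (N + b).choose N := by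
  rw [bihomSubmodule_eq_restrictSupport,
    Module.finrank_eq_nat_card_basis (basisRestrictSupport ℂ _), natCard_bidegreeExponents]

end Bihomogeneous

open Bihomogeneous in
theorem statement7_general (N : ℕ) (m n : ℕ) (hnm : n < m) :
    (Module.finrank ℂ
        (↥(bihomSubmodule N (m - 1) (n + 1)) ⧸
          (Submodule.map (deltaLM N) (bihomSubmodule N m n)).comap
            (bihomSubmodule N (m - 1) (n + 1)).subtype) : ℤ) =
      (Nat.choose (N + m - 1) N : ℤ) * Nat.choose (N + n + 1) N -
        (Nat.choose (N + m) N : ℤ) * Nat.choose (N + n) N := by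
  obtain ⟨a, rfl⟩ : ∃ a, m = a + 1 := ⟨m - 1, by omega⟩
  rw [Submodule.finrank_quotient_comap_map (deltaLM N) ?maps_to ?injOn, finrank_bihomSubmodule,
    finrank_bihomSubmodule]
  · simp only [Nat.add_sub_cancel, ← add_assoc, Nat.cast_mul]
  case maps_to =>
    rintro _ ⟨A, hA, rfl⟩
    simpa [deltaLM_apply] using deltaDer_mem hA
  case injOn =>
    intro A hA h0
    exact eq_zero_of_deltaDer_eq_zero (by omega) hA (by rwa [← deltaLM_apply])

/-- For `0 ≤ n < m`, the cokernel of
`δ : S_{m,n} → S_{m−1,n+1}` has dimension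
`C(N+m−1,N)·C(N+n+1,N) − C(N+m,N)·C(N+n,N)`. -/
theorem statement7 (N : ℕ) (hN : 2 ≤ N) (m n : ℕ) (hnm : n < m) :
    (Module.finrank ℂ
        (↥(bihomSubmodule N (m - 1) (n + 1)) ⧸
          (Submodule.map (deltaLM N) (bihomSubmodule N m n)).comap
            (bihomSubmodule N (m - 1) (n + 1)).subtype) : ℤ) =
      (Nat.choose (N + m - 1) N : ℤ) * Nat.choose (N + n + 1) N -
        (Nat.choose (N + m) N : ℤ) * Nat.choose (N + n) N :=
  statement7_general N m n hnm
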